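/- For every q ∈ 𝔯⁺ with |q| ≥ 0.54, the minimum of F_q(s) = (w(q)+s)ᵀ 𝓗(q) (w(q)+s) over the closed disk {s ∈ ℝ² : |s| ≤ ρ(q)} equals the minimum of f_q(α) over α ∈ [0, π/2], i.e. the minimum of F_q over the disk is attained on the boundary arc {ρ(q)·(cos(θ+α), sin(θ+α)) : α ∈ [0, π/2]}. -/

import Mathlib

open Matrix

noncomputable section

/-- Euclidean norm of a point of `ℝ²`. -/
def nrm (q : ℝ × ℝ) : ℝ := Real.sqrt (q.1 ^ 2 + q.2 ^ 2)

/-- Hill's region `𝔯`. -/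
def HillRegion : Set (ℝ × ℝ) :=
  {q | (3:ℝ) ^ ((4:ℝ)/3) / 2 < 1 / nrm q + (3/2) * q.1 ^ 2 ∧
       |q.1| < (3:ℝ) ^ (-(1:ℝ)/3) ∧ |q.2| < 2 * (3:ℝ) ^ (-(4:ℝ)/3)}

/-- The first quadrant part `𝔯⁺` of Hill's region. -/
def HillRegionPlus : Set (ℝ × ℝ) := {q ∈ HillRegion | 0 ≤ q.1 ∧ 0 ≤ q.2}

/-- The symmetric matrix `𝓗(q)`. -/
def Hmat (q : ℝ × ℝ) : Matrix (Fin 2) (Fin 2) ℝ :=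
  (1 / (nrm q) ^ 5) •
    !![-2 * (nrm q) ^ 5 + (nrm q) ^ 2 - 3 * q.1 ^ 2, -3 * q.1 * q.2;
       -3 * q.1 * q.2, (nrm q) ^ 5 + (nrm q) ^ 2 - 3 * q.2 ^ 2]

/-- The vector `w(q) = (q₂/|q|³, 3q₁ - q₁/|q|³)`. -/
def w (q : ℝ × ℝ) : Fin 2 → ℝ := ![q.2 / (nrm q) ^ 3, 3 * q.1 - q.1 / (nrm q) ^ 3]

/-- The radius `ρ(q) = √(3q₁² + 2/|q| - 3^{4/3})`. -/
def ρ (q : ℝ × ℝ) : ℝ := Real.sqrt (3 * q.1 ^ 2 + 2 / nrm q - (3:ℝ) ^ ((4:ℝ)/3))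

/-- The function `f_q(α) = (w(q)+s)ᵀ 𝓗(q) (w(q)+s)` where
`s = ρ(q)·(cos(θ+α), sin(θ+α))` and `θ` is the polar angle of `q`. -/
def fq (q : ℝ × ℝ) (θ : ℝ) (α : ℝ) : ℝ :=
  (w q + ρ q • ![Real.cos (θ + α), Real.sin (θ + α)]) ⬝ᵥ
    (Hmat q).mulVec (w q + ρ q • ![Real.cos (θ + α), Real.sin (θ + α)])

/-- The quadratic function `F_q(s) = (w(q)+s)ᵀ 𝓗(q) (w(q)+s)` on `s ∈ ℝ²`. -/
def Fq (q : ℝ × ℝ) (s : ℝ × ℝ) : ℝ :=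
  (w q + ![s.1, s.2]) ⬝ᵥ (Hmat q).mulVec (w q + ![s.1, s.2])

/-!
Rotate the plane by the polar angle `θ` of `q`, so that `q` lies on the first axis. There `F_q`
becomes `a (w₁ + x)² + 2b (w₁ + x)(w₂ + y) + d (w₂ + y)²` with `b, d ≥ 0`, and the two
inequalities `b (w₁ + ρ) + d (w₂ + ρ) ≤ 0` and `a w₁ + b (w₂ + ρ) ≤ 0` say that on the disk of
radius `ρ` this quadratic does not increase when `y` is raised, nor when `x` is replaced by `|x|`.
Raising `y` up to the circle and then reflecting `x` moves any point of the disk onto the quarter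
arc `{ρ (cos α, sin α) : α ∈ [0, π/2]}`, which is the arc of `f_q`, without increasing `F_q`.

Both inequalities reduce to polynomial estimates in `r = |q|`. Hill's region forces
`r < β = 3^{-1/3}`, and the identity `r (ρ² + 3 q₂²) = 3 (β - r)² (2β + r)` shows that `ρ` and
`q₂` are of order `β - r`, small enough for `r ≥ 0.54`.
-/

open Real Set

def shiftedQuad (a b d w₁ w₂ x y : ℝ) : ℝ :=
  a * (w₁ + x) ^ 2 + 2 * b * (w₁ + x) * (w₂ + y) + d * (w₂ + y) ^ 2

section shiftedQuad

variable {a b d w₁ w₂ R : ℝ}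

theorem shiftedQuad_le_of_le_snd (hb : 0 ≤ b) (hd : 0 ≤ d)
    (h : b * (w₁ + R) + d * (w₂ + R) ≤ 0) {x y y' : ℝ} (hx : x ≤ R) (hyy' : y ≤ y')
    (hy' : y + y' ≤ 2 * R) :
    shiftedQuad a b d w₁ w₂ x y' ≤ shiftedQuad a b d w₁ w₂ x y := by
  have hdiff : shiftedQuad a b d w₁ w₂ x y' - shiftedQuad a b d w₁ w₂ x y
      = (y' - y) * (2 * b * (w₁ + x) + d * (2 * w₂ + y + y')) := by
    unfold shiftedQuad; ring
  have hslope : 2 * b * (w₁ + x) + d * (2 * w₂ + y + y') ≤ 0 := by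
    nlinarith [mul_le_mul_of_nonneg_left hx hb, mul_le_mul_of_nonneg_left hy' hd]
  linarith [mul_nonpos_of_nonneg_of_nonpos (sub_nonneg.2 hyy') hslope]

theorem shiftedQuad_abs_fst_le (hb : 0 ≤ b) (h : a * w₁ + b * (w₂ + R) ≤ 0)
    {x y : ℝ} (hy : y ≤ R) :
    shiftedQuad a b d w₁ w₂ |x| y ≤ shiftedQuad a b d w₁ w₂ x y := by
  rcases le_or_gt 0 x with hx | hx
  · rw [abs_of_nonneg hx]
  have hdiff : shiftedQuad a b d w₁ w₂ (-x) y - shiftedQuad a b d w₁ w₂ x y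
      = -4 * x * (a * w₁ + b * (w₂ + y)) := by
    unfold shiftedQuad; ring
  have hslope : a * w₁ + b * (w₂ + y) ≤ 0 := by
    nlinarith [mul_le_mul_of_nonneg_left hy hb]
  rw [abs_of_neg hx]
  linarith [mul_nonpos_of_nonneg_of_nonpos (by linarith : 0 ≤ -4 * x) hslope]

theorem exists_mem_Icc_mul_cos_eq_mul_sin_eq_sqrt (hR : 0 ≤ R) {X : ℝ} (hX : 0 ≤ X)
    (hXR : X ≤ R) :
    ∃ α ∈ Icc 0 (π / 2), R * cos α = X ∧ R * sin α = √(R ^ 2 - X ^ 2) := by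
  rcases hR.eq_or_lt with rfl | hR
  · obtain rfl : X = 0 := le_antisymm hXR hX
    exact ⟨0, left_mem_Icc.2 (by positivity), by simp, by simp⟩
  refine ⟨arccos (X / R), ⟨arccos_nonneg _, arccos_le_pi_div_two.2 (by positivity)⟩, ?_, ?_⟩
  · rw [cos_arccos (by linarith [div_nonneg hX hR.le]) ((div_le_one hR).2 hXR)]
    field_simp
  · have h : R ^ 2 - X ^ 2 = R ^ 2 * (1 - (X / R) ^ 2) := by field_simp
    rw [sin_arccos, h, sqrt_mul (sq_nonneg R), sqrt_sq hR.le]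

theorem exists_quarterArc_shiftedQuad_le (hb : 0 ≤ b) (hd : 0 ≤ d) (hR : 0 ≤ R)
    (h₁ : a * w₁ + b * (w₂ + R) ≤ 0) (h₂ : b * (w₁ + R) + d * (w₂ + R) ≤ 0)
    {x y : ℝ} (hxy : x ^ 2 + y ^ 2 ≤ R ^ 2) :
    ∃ α ∈ Icc 0 (π / 2),
      shiftedQuad a b d w₁ w₂ (R * cos α) (R * sin α) ≤ shiftedQuad a b d w₁ w₂ x y := by
  have hxR : |x| ≤ R := abs_le_of_sq_le_sq (by nlinarith) hR
  set Y := √(R ^ 2 - x ^ 2)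
  have hyY : y ≤ Y := (le_abs_self y).trans (abs_le_sqrt (by linarith))
  have hYR : Y ≤ R := (sqrt_le_left hR).2 (by nlinarith)
  obtain ⟨α, hα, hcos, hsin⟩ :=
    exists_mem_Icc_mul_cos_eq_mul_sin_eq_sqrt hR (abs_nonneg x) hxR
  refine ⟨α, hα, ?_⟩
  rw [hcos, hsin, sq_abs]
  calc shiftedQuad a b d w₁ w₂ |x| Y ≤ shiftedQuad a b d w₁ w₂ x Y :=
        shiftedQuad_abs_fst_le hb h₁ hYR
    _ ≤ shiftedQuad a b d w₁ w₂ x y :=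
        shiftedQuad_le_of_le_snd hb hd h₂ ((le_abs_self x).trans hxR) hyY (by linarith)

end shiftedQuad

theorem mem_Icc_of_three_mul_pow_three_eq_one {β : ℝ} (hβ : 3 * β ^ 3 = 1) : β ∈ Icc 0.69 0.7 := by
  constructor <;> nlinarith [sq_nonneg (β + 0.345), sq_nonneg (β + 0.35)]

section HillCoefficients

/-! Here `β` stands for `3^{-1/3}` and `hkey` is the identity
`nrm_mul_ρ_sq_add_of_mem_HillRegion` with `q = r • (c, s)`: it makes `ρ` and `r * s` of order
`β - r`. -/

variable {β r c s ρ : ℝ}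

theorem pow_three_le_one_third (hβ : 3 * β ^ 3 = 1) (hr : 0 ≤ r) (hrβ : r ≤ β) :
    r ^ 3 ≤ 1 / 3 := by
  nlinarith [pow_le_pow_left₀ hr hrβ 3]

theorem hill_radius_le (hβ : 3 * β ^ 3 = 1) (hr : 0.54 ≤ r) (hrβ : r ≤ β) (hρ : 0 ≤ ρ)
    (hkey : r * (ρ ^ 2 + 3 * (r * s) ^ 2) = 3 * (β - r) ^ 2 * (2 * β + r)) :
    ρ ≤ 3.3 * (β - r) := by
  obtain ⟨-, hβhi⟩ := mem_Icc_of_three_mul_pow_three_eq_one hβ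
  have hρsq : r * ρ ^ 2 ≤ r * (3.3 * (β - r)) ^ 2 := by
    nlinarith [sq_nonneg (r * s), sq_nonneg (β - r)]
  exact (pow_le_pow_iff_left₀ hρ (by linarith) two_ne_zero).1
    (le_of_mul_le_mul_left hρsq (by linarith))

theorem nine_mul_sq_mul_sub_le_one_sub (hβ : 3 * β ^ 3 = 1) (hr : 0 ≤ r) (hrβ : r ≤ β) :
    9 * r ^ 2 * (β - r) ≤ 1 - 3 * r ^ 3 := by
  have h : 1 - 3 * r ^ 3 = 3 * (β - r) * (β ^ 2 + β * r + r ^ 2) := by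
    linear_combination -hβ
  rw [h]
  nlinarith [mul_nonneg (sub_nonneg.2 hrβ)
    (mul_nonneg (sub_nonneg.2 hrβ) (by linarith : 0 ≤ β + 2 * r))]

theorem hill_cross_terms_le (hβ : 3 * β ^ 3 = 1) (hr : 0.54 ≤ r) (hrβ : r ≤ β)
    (hc : 0 ≤ c) (hs : 0 ≤ s) (hcs : c ^ 2 + s ^ 2 = 1) (hρ : 0 ≤ ρ)
    (hkey : r * (ρ ^ 2 + 3 * (r * s) ^ 2) = 3 * (β - r) ^ 2 * (2 * β + r)) :
    9 * r ^ 4 * c ^ 2 * (r * s) ^ 2 + 3 * r ^ 4 * c * (r * s) * ρ ≤ 1.2 * (β - r) := by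
  obtain ⟨-, hβhi⟩ := mem_Icc_of_three_mul_pow_three_eq_one hβ
  have hr0 : 0 ≤ r := by linarith
  have hr3 := pow_three_le_one_third hβ hr0 hrβ
  have hc2 : c ^ 2 ≤ 1 := by nlinarith
  have hc1 : c ≤ 1 := by nlinarith
  set v := r * s
  have hv : 0 ≤ v := mul_nonneg hr0 hs
  have hamgm : 9 * v ^ 2 + 3 * v * ρ ≤ 3.5 * (ρ ^ 2 + 3 * v ^ 2) := by
    nlinarith [sq_nonneg (v - ρ), sq_nonneg ρ]
  calc 9 * r ^ 4 * c ^ 2 * v ^ 2 + 3 * r ^ 4 * c * v * ρ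
      ≤ r ^ 4 * (9 * v ^ 2 + 3 * v * ρ) := by
        nlinarith [mul_nonneg (pow_nonneg hr0 4) (mul_nonneg (sq_nonneg v) (sub_nonneg.2 hc2)),
          mul_nonneg (pow_nonneg hr0 4) (mul_nonneg (mul_nonneg hv hρ) (sub_nonneg.2 hc1))]
    _ ≤ 3.5 * r ^ 3 * (r * (ρ ^ 2 + 3 * v ^ 2)) := by
        nlinarith [mul_le_mul_of_nonneg_left hamgm (pow_nonneg hr0 4)]
    _ ≤ 3.5 * (1 / 3) * (3 * (β - r) ^ 2 * 2.1) := by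
        rw [hkey]
        gcongr
        · exact mul_nonneg (by positivity) (by linarith)
        · linarith
    _ ≤ 1.2 * (β - r) := by nlinarith

theorem hill_product_ge (hβ : 3 * β ^ 3 = 1) (hr : 0.54 ≤ r) (hrβ : r ≤ β) (hρ : 0 ≤ ρ)
    (hkey : r * (ρ ^ 2 + 3 * (r * s) ^ 2) = 3 * (β - r) ^ 2 * (2 * β + r)) :
    1.32 * (β - r) ≤
      (1 + r ^ 3 - 3 * r * (r * s) ^ 2) * (1 - 3 * r ^ 3 + 3 * r * (r * s) ^ 2 - ρ * r ^ 2) := by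
  obtain ⟨-, hβhi⟩ := mem_Icc_of_three_mul_pow_three_eq_one hβ
  have hr0 : 0 < r := by linarith
  have hρδ := hill_radius_le hβ hr hrβ hρ hkey
  have hcubic := nine_mul_sq_mul_sub_le_one_sub hβ hr0.le hrβ
  set v := r * s
  have hF₁ : 0.8 ≤ 1 + r ^ 3 - 3 * r * v ^ 2 := by
    nlinarith [mul_nonneg hr0.le (sq_nonneg ρ), pow_pos hr0 3, sq_nonneg (β - r)]
  have hF₂ : 1.65 * (β - r) ≤ 1 - 3 * r ^ 3 + 3 * r * v ^ 2 - ρ * r ^ 2 := by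
    nlinarith [mul_le_mul_of_nonneg_right hρδ (sq_nonneg r), mul_nonneg hr0.le (sq_nonneg v),
      mul_le_mul_of_nonneg_right (mul_le_mul hr hr (by norm_num) hr0.le) (sub_nonneg.2 hrβ)]
  linarith [mul_le_mul hF₁ hF₂ (by linarith) (by linarith)]

theorem hill_slope_snd_nonpos (hβ : 3 * β ^ 3 = 1) (hr : 0.54 ≤ r) (hrβ : r ≤ β)
    (hc : 0 ≤ c) (hs : 0 ≤ s) (hcs : c ^ 2 + s ^ 2 = 1) (hρ : 0 ≤ ρ)
    (hkey : r * (ρ ^ 2 + 3 * (r * s) ^ 2) = 3 * (β - r) ^ 2 * (2 * β + r)) :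
    3 * c * s * (3 * r * c * s + ρ)
      + (c ^ 2 - 2 * s ^ 2 + 1 / r ^ 3) * (3 * r * c ^ 2 - 1 / r ^ 2 + ρ) ≤ 0 := by
  have hr0 : 0 < r := by linarith
  have hscaled : r ^ 5 * (3 * c * s * (3 * r * c * s + ρ)
      + (c ^ 2 - 2 * s ^ 2 + 1 / r ^ 3) * (3 * r * c ^ 2 - 1 / r ^ 2 + ρ))
      = 9 * r ^ 4 * c ^ 2 * (r * s) ^ 2 + 3 * r ^ 4 * c * (r * s) * ρ
        - (1 + r ^ 3 - 3 * r * (r * s) ^ 2)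
          * (1 - 3 * r ^ 3 + 3 * r * (r * s) ^ 2 - ρ * r ^ 2) := by
    field_simp
    linear_combination (2 * r ^ 3 + r ^ 5 * ρ + r ^ 6 * (3 * c ^ 2 - 9 * s ^ 2 + 3)) * hcs
  have hneg : r ^ 5 * (3 * c * s * (3 * r * c * s + ρ)
      + (c ^ 2 - 2 * s ^ 2 + 1 / r ^ 3) * (3 * r * c ^ 2 - 1 / r ^ 2 + ρ)) ≤ 0 := by
    rw [hscaled]
    linarith [hill_cross_terms_le hβ hr hrβ hc hs hcs hρ hkey, hill_product_ge hβ hr hrβ hρ hkey]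
  exact nonpos_of_mul_nonpos_right hneg (by positivity)

theorem hill_coeff_snd_nonneg (hβ : 3 * β ^ 3 = 1) (hr : 0 < r) (hrβ : r ≤ β)
    (hcs : c ^ 2 + s ^ 2 = 1) : 0 ≤ c ^ 2 - 2 * s ^ 2 + 1 / r ^ 3 := by
  have hr3 := pow_three_le_one_third hβ hr.le hrβ
  have h3 : 3 ≤ 1 / r ^ 3 := by rw [le_div_iff₀ (by positivity)]; linarith
  nlinarith

theorem hill_slope_fst_nonpos (hβ : 3 * β ^ 3 = 1) (hr : 0.54 ≤ r) (hrβ : r ≤ β)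
    (hc : 0 ≤ c) (hs : 0 ≤ s) (hcs : c ^ 2 + s ^ 2 = 1) (hρ : 0 ≤ ρ)
    (hkey : r * (ρ ^ 2 + 3 * (r * s) ^ 2) = 3 * (β - r) ^ 2 * (2 * β + r)) :
    (s ^ 2 - 2 * c ^ 2 - 2 / r ^ 3) * (3 * r * c * s)
      + 3 * c * s * (3 * r * c ^ 2 - 1 / r ^ 2 + ρ) ≤ 0 := by
  obtain ⟨-, hβhi⟩ := mem_Icc_of_three_mul_pow_three_eq_one hβ
  have hr0 : 0 < r := by linarith
  have hρδ := hill_radius_le hβ hr hrβ hρ hkey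
  have h : (s ^ 2 - 2 * c ^ 2 - 2 / r ^ 3) * (3 * r * c * s)
      + 3 * c * s * (3 * r * c ^ 2 - 1 / r ^ 2 + ρ) = 3 * c * s * (r - 3 / r ^ 2 + ρ) := by
    field_simp
    linear_combination (r ^ 3 * c * s) * hcs
  have h3 : 3 ≤ 3 / r ^ 2 := by rw [le_div_iff₀ (by positivity)]; nlinarith
  rw [h]
  exact mul_nonpos_of_nonneg_of_nonpos (by positivity) (by linarith)

end HillCoefficients

theorem three_mul_rpow_neg_one_third_pow_three : 3 * ((3 : ℝ) ^ (-(1 : ℝ) / 3)) ^ 3 = 1 := by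
  rw [← rpow_natCast, ← rpow_mul (by norm_num)]
  norm_num

theorem rpow_four_thirds_eq_nine_mul_sq :
    (3 : ℝ) ^ ((4 : ℝ) / 3) = 9 * ((3 : ℝ) ^ (-(1 : ℝ) / 3)) ^ 2 := by
  have h : (3 : ℝ) ^ (-(1 : ℝ) / 3) * 3 ^ ((4 : ℝ) / 3) = 3 := by
    rw [← rpow_add (by norm_num)]; norm_num
  have hβ := three_mul_rpow_neg_one_third_pow_three
  exact mul_left_cancel₀ (by positivity : (3 : ℝ) ^ (-(1 : ℝ) / 3) ≠ 0)
    (by linear_combination h - 3 * hβ)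

theorem nrm_sq (q : ℝ × ℝ) : nrm q ^ 2 = q.1 ^ 2 + q.2 ^ 2 :=
  sq_sqrt (by positivity)

theorem nrm_lt_of_mem_HillRegion {q : ℝ × ℝ} (hq : q ∈ HillRegion) :
    nrm q < (3 : ℝ) ^ (-(1 : ℝ) / 3) := by
  obtain ⟨hHill, hq1, -⟩ := hq
  rw [rpow_four_thirds_eq_nine_mul_sq] at hHill
  set β := (3 : ℝ) ^ (-(1 : ℝ) / 3)
  have hβ : 3 * β ^ 3 = 1 := three_mul_rpow_neg_one_third_pow_three
  have hβ0 : 0 < β := by positivity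
  by_contra! hβr
  have hinv : 1 / nrm q ≤ 3 * β ^ 2 := by
    rw [div_le_iff₀ (hβ0.trans_le hβr)]; nlinarith
  have hq1sq : q.1 ^ 2 < β ^ 2 := sq_lt_sq' (abs_lt.1 hq1).1 (abs_lt.1 hq1).2
  linarith

theorem ρ_sq_of_mem_HillRegion {q : ℝ × ℝ} (hq : q ∈ HillRegion) :
    ρ q ^ 2 = 3 * q.1 ^ 2 + 2 / nrm q - (3 : ℝ) ^ ((4 : ℝ) / 3) := by
  obtain ⟨hHill, -⟩ := hq
  exact sq_sqrt (by rw [div_eq_mul_one_div]; linarith)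

/-- `ρ² + 3q₂² = 3r² + 2/r - 3^{4/3}`, which has a double zero at the Lagrange distance
`r = 3^{-1/3}`. -/
theorem nrm_mul_ρ_sq_add_of_mem_HillRegion {q : ℝ × ℝ} (hq : q ∈ HillRegion) (hr : 0 < nrm q) :
    nrm q * (ρ q ^ 2 + 3 * q.2 ^ 2) = 3 * ((3 : ℝ) ^ (-(1 : ℝ) / 3) - nrm q) ^ 2 *
      (2 * (3 : ℝ) ^ (-(1 : ℝ) / 3) + nrm q) := by
  rw [ρ_sq_of_mem_HillRegion hq, rpow_four_thirds_eq_nine_mul_sq]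
  have hβ := three_mul_rpow_neg_one_third_pow_three
  set β := (3 : ℝ) ^ (-(1 : ℝ) / 3)
  field_simp
  linear_combination (-3 * nrm q) * nrm_sq q - 2 * hβ

/-- `𝓗(q) = diag(-2, 1) + (I - 3 q qᵀ / |q|²) / |q|³`. -/
theorem Fq_eq_of_nrm_eq {q : ℝ × ℝ} {r : ℝ} (hr : r ≠ 0) (hnrm : nrm q = r) (p : ℝ × ℝ) :
    Fq q p = -2 * (q.2 / r ^ 3 + p.1) ^ 2 + (3 * q.1 - q.1 / r ^ 3 + p.2) ^ 2
      + (((q.2 / r ^ 3 + p.1) ^ 2 + (3 * q.1 - q.1 / r ^ 3 + p.2) ^ 2) * r ^ 2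
        - 3 * (q.1 * (q.2 / r ^ 3 + p.1) + q.2 * (3 * q.1 - q.1 / r ^ 3 + p.2)) ^ 2) / r ^ 5 := by
  simp only [Fq, Hmat, w, hnrm, mulVec, dotProduct, Fin.sum_univ_two, of_apply, Matrix.smul_apply,
    cons_val_zero, cons_val_one, Pi.add_apply, smul_eq_mul, cons_val_fin_one]
  field_simp
  ring

/-- The coefficients are those of `𝓗(q)` and `w(q)` in the orthonormal frame
`(c, s), (-s, c)`, in which `q` lies on the first axis. -/
theorem Fq_rotate {q : ℝ × ℝ} {r c s : ℝ} (hr : 0 < r) (hnrm : nrm q = r) (hq1 : q.1 = r * c)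
    (hq2 : q.2 = r * s) (hcs : c ^ 2 + s ^ 2 = 1) (x y : ℝ) :
    Fq q (c * x - s * y, s * x + c * y) = shiftedQuad (s ^ 2 - 2 * c ^ 2 - 2 / r ^ 3) (3 * c * s)
      (c ^ 2 - 2 * s ^ 2 + 1 / r ^ 3) (3 * r * c * s) (3 * r * c ^ 2 - 1 / r ^ 2) x y := by
  have hP₁ : r * s / r ^ 3 + (c * x - s * y)
      = c * (3 * r * c * s + x) - s * (3 * r * c ^ 2 - 1 / r ^ 2 + y) := by
    field_simp; ring
  have hP₂ : 3 * (r * c) - r * c / r ^ 3 + (s * x + c * y)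
      = s * (3 * r * c * s + x) + c * (3 * r * c ^ 2 - 1 / r ^ 2 + y) := by
    field_simp; linear_combination (-3 * r ^ 3 * c) * hcs
  rw [Fq_eq_of_nrm_eq hr.ne' hnrm, hq1, hq2, hP₁, hP₂]
  unfold shiftedQuad
  generalize 3 * r * c * s + x = X
  generalize 3 * r * c ^ 2 - 1 / r ^ 2 + y = Y
  field_simp
  linear_combination (Y ^ 2 - X ^ 2 * (3 * (c ^ 2 + s ^ 2) + 2)) * hcs

theorem continuous_fq (q : ℝ × ℝ) (θ : ℝ) : Continuous (fq q θ) := by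
  unfold fq; fun_prop

theorem fq_eq_Fq (q : ℝ × ℝ) (θ α : ℝ) :
    fq q θ α = Fq q (ρ q * cos (θ + α), ρ q * sin (θ + α)) := by
  simp [fq, Fq]

theorem fq_eq_shiftedQuad {q : ℝ × ℝ} {r θ : ℝ} (hr : 0 < r) (hnrm : nrm q = r)
    (hq1 : q.1 = r * cos θ) (hq2 : q.2 = r * sin θ) (α : ℝ) :
    fq q θ α = shiftedQuad (sin θ ^ 2 - 2 * cos θ ^ 2 - 2 / r ^ 3) (3 * cos θ * sin θ)
      (cos θ ^ 2 - 2 * sin θ ^ 2 + 1 / r ^ 3) (3 * r * cos θ * sin θ)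
      (3 * r * cos θ ^ 2 - 1 / r ^ 2) (ρ q * cos α) (ρ q * sin α) := by
  have h : (ρ q * cos (θ + α), ρ q * sin (θ + α))
      = (cos θ * (ρ q * cos α) - sin θ * (ρ q * sin α),
          sin θ * (ρ q * cos α) + cos θ * (ρ q * sin α)) := by
    rw [cos_add, sin_add]; ext <;> ring
  rw [fq_eq_Fq, h, Fq_rotate hr hnrm hq1 hq2 (cos_sq_add_sin_sq θ)]

theorem exists_fq_le_Fq {q : ℝ × ℝ} (hq : q ∈ HillRegion) (hr : 0.54 ≤ nrm q) {θ : ℝ}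
    (hθ : θ ∈ Icc 0 (π / 2)) (hq1 : q.1 = nrm q * cos θ) (hq2 : q.2 = nrm q * sin θ)
    {z : ℝ × ℝ} (hz : z.1 ^ 2 + z.2 ^ 2 ≤ ρ q ^ 2) :
    ∃ α ∈ Icc 0 (π / 2), fq q θ α ≤ Fq q z := by
  set r := nrm q
  have hr0 : 0 < r := by linarith
  have hβ := three_mul_rpow_neg_one_third_pow_three
  have hrβ : r ≤ (3 : ℝ) ^ (-(1 : ℝ) / 3) := (nrm_lt_of_mem_HillRegion hq).le
  have hkey := nrm_mul_ρ_sq_add_of_mem_HillRegion hq hr0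
  have hρ : 0 ≤ ρ q := sqrt_nonneg _
  have hc : 0 ≤ cos θ := cos_nonneg_of_mem_Icc ⟨by linarith [hθ.1, pi_pos], hθ.2⟩
  have hs : 0 ≤ sin θ := sin_nonneg_of_nonneg_of_le_pi hθ.1 (by linarith [hθ.2, pi_pos])
  have hcs := cos_sq_add_sin_sq θ
  rw [hq2] at hkey
  set c := cos θ
  set s := sin θ
  set x := c * z.1 + s * z.2
  set y := -s * z.1 + c * z.2
  have hz_rot : z = (c * x - s * y, s * x + c * y) := by
    ext
    · linear_combination -z.1 * hcs
    · linear_combination -z.2 * hcs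
  have hxy : x ^ 2 + y ^ 2 ≤ ρ q ^ 2 := by
    have h : x ^ 2 + y ^ 2 = (c ^ 2 + s ^ 2) * (z.1 ^ 2 + z.2 ^ 2) := by ring
    rwa [h, hcs, one_mul]
  obtain ⟨α, hα, hle⟩ := exists_quarterArc_shiftedQuad_le (by positivity)
    (hill_coeff_snd_nonneg hβ hr0 hrβ hcs) hρ
    (hill_slope_fst_nonpos hβ hr hrβ hc hs hcs hρ hkey)
    (hill_slope_snd_nonpos hβ hr hrβ hc hs hcs hρ hkey) hxy
  refine ⟨α, hα, ?_⟩
  rwa [fq_eq_shiftedQuad hr0 rfl hq1 hq2, hz_rot, Fq_rotate hr0 rfl hq1 hq2 hcs]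

/-- For `q ∈ 𝔯⁺` with `|q| ≥ 0.54` and polar angle `θ ∈ [0, π/2]`, the minimum of
`F_q` over the closed disk `{s : |s| ≤ ρ(q)}` equals the minimum of `f_q(α)` over
`α ∈ [0, π/2]`: that minimum is attained at a boundary point
`ρ(q)·(cos(θ+a), sin(θ+a))` with `a ∈ [0, π/2]`. -/
theorem min_on_disk_eq_min_on_arc (q : ℝ × ℝ) (hq : q ∈ HillRegionPlus)
    (hr : 0.54 ≤ nrm q) (θ : ℝ) (hθ : θ ∈ Set.Icc (0:ℝ) (Real.pi / 2))
    (hq1 : q.1 = nrm q * Real.cos θ) (hq2 : q.2 = nrm q * Real.sin θ) :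
    ∃ a ∈ Set.Icc (0:ℝ) (Real.pi / 2),
      (∀ α ∈ Set.Icc (0:ℝ) (Real.pi / 2), fq q θ a ≤ fq q θ α) ∧
      (∀ s : ℝ × ℝ, s.1 ^ 2 + s.2 ^ 2 ≤ ρ q ^ 2 → fq q θ a ≤ Fq q s) := by
  obtain ⟨a, ha, hmin⟩ := isCompact_Icc.exists_isMinOn
    (nonempty_Icc.2 (by positivity : (0 : ℝ) ≤ π / 2)) (continuous_fq q θ).continuousOn
  refine ⟨a, ha, fun α hα => hmin hα, fun z hz => ?_⟩
  obtain ⟨α, hα, hle⟩ := exists_fq_le_Fq hq.1 hr hθ hq1 hq2 hz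
  exact (hmin hα).trans hle

end
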